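/- Let T(A,α) ⊆ K[Rep(A,α)] be the subalgebra generated by {tr_α a : a ∈ A}. If d : A → A is a derivation with d(e_v) = 0 for all v, then the induced derivation d_α of K[Rep(A,α)] restricts to a derivation of T(A,α), and this restriction depends only on the induced map of d on A/[A,A]. -/

import Mathlib

/-!
A derivation that maps a generating set of a subalgebra into the subalgebra preserves it, and two
derivations agreeing on the generators agree on it. Since `d_α (tr_α a) = tr_α (d a)`, both parts
reduce to statements about traces, and `tr_α` vanishes on `[A, A]` because
`tr_α (a b) = Σ_{i,k} a_{ik} b_{ki} = tr_α (b a)` in the commutative ring `K[Rep(A,α)]`.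
-/

open scoped Classical

/-- A (K-linear) derivation of a possibly noncommutative algebra. -/
def IsDerivation (K : Type*) {A : Type*} [CommRing K] [Ring A] [Algebra K A]
    (d : A →ₗ[K] A) : Prop :=
  ∀ a b : A, d (a * b) = a * d b + d a * b

/-- The K-submodule [A,A] spanned by commutators. -/
def commSpan (K : Type*) (A : Type*) [CommRing K] [Ring A] [Algebra K A] : Submodule K A :=
  Submodule.span K {x : A | ∃ a b : A, x = a * b - b * a}

/-- The inner derivation x ↦ cx - xc. -/
def innerDer (K : Type*) {A : Type*} [CommRing K] [Ring A] [Algebra K A] (c : A) :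
    A →ₗ[K] A :=
  LinearMap.mulLeft K c - LinearMap.mulRight K c

section Rep

variable (K : Type*) (A : Type*) [CommRing K] [Ring A] [Algebra K A]
variable (m : ℕ) (e : Fin m → A) (α : Fin m → ℕ)

/-- e_1, ..., e_m is a complete set of orthogonal idempotents. -/
def CompleteOrthIdem : Prop :=
  (∀ v, e v * e v = e v) ∧ (∀ v w, v ≠ w → e v * e w = 0) ∧ (∑ v, e v = 1)

/-- n = Σ_v α_v. -/
def nn : ℕ := ∑ v, α v

/-- i lies in the v-th diagonal block. -/
def inBlock (v : Fin m) (i : Fin (nn m α)) : Prop :=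
  (∑ w ∈ Finset.univ.filter (· < v), α w) ≤ i.val ∧
    i.val < ∑ w ∈ Finset.univ.filter (· ≤ v), α w

/-- The entries of the diagonal 0-1 matrix Δ^v. -/
noncomputable def delta (v : Fin m) (i j : Fin (nn m α)) : K :=
  if i = j ∧ inBlock m α v i then 1 else 0

/-- The defining relations of the coordinate ring K[Rep(A,α)] among the
generators a_{ij}. -/
def repRels : Set (MvPolynomial (A × Fin (nn m α) × Fin (nn m α)) K) :=
  {P | (∃ (a b : A) (i j : Fin (nn m α)),
          P = MvPolynomial.X (a * b, i, j)
              - ∑ k, MvPolynomial.X (a, i, k) * MvPolynomial.X (b, k, j)) ∨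
       (∃ (a b : A) (i j : Fin (nn m α)),
          P = MvPolynomial.X (a + b, i, j) - MvPolynomial.X (a, i, j) - MvPolynomial.X (b, i, j)) ∨
       (∃ (c : K) (a : A) (i j : Fin (nn m α)),
          P = MvPolynomial.X (c • a, i, j) - MvPolynomial.C c * MvPolynomial.X (a, i, j)) ∨
       (∃ (v : Fin m) (i j : Fin (nn m α)),
          P = MvPolynomial.X (e v, i, j) - MvPolynomial.C (delta K m α v i j))}

/-- The coordinate ring K[Rep(A,α)] of the representation scheme. -/
abbrev RepRing := MvPolynomial (A × Fin (nn m α) × Fin (nn m α)) K ⧸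
  Ideal.span (repRels K A m e α)

/-- The generator a_{ij} of K[Rep(A,α)]. -/
noncomputable def repGen (a : A) (i j : Fin (nn m α)) : RepRing K A m e α :=
  Ideal.Quotient.mk _ (MvPolynomial.X (a, i, j))

/-- The trace function tr_α a = Σ_i a_{ii}. -/
noncomputable def trRep (a : A) : RepRing K A m e α :=
  ∑ i, repGen K A m e α a i i

/-- The trace algebra T(A,α), generated by the elements tr_α a. -/
noncomputable def traceAlg : Subalgebra K (RepRing K A m e α) :=
  Algebra.adjoin K (Set.range (trRep K A m e α))

end Rep
namespace IsDerivation

variable {K R : Type*} [CommRing K] [Ring R] [Algebra K R] {D D' : R →ₗ[K] R}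

theorem map_one (hD : IsDerivation K D) : D 1 = 0 := by
  simpa using hD 1 1

theorem map_algebraMap (hD : IsDerivation K D) (c : K) : D (algebraMap K R c) = 0 := by
  rw [Algebra.algebraMap_eq_smul_one, map_smul, hD.map_one, smul_zero]

theorem mapsTo_adjoin (hD : IsDerivation K D) {s : Set R}
    (hs : Set.MapsTo D s (Algebra.adjoin K s)) :
    Set.MapsTo D (Algebra.adjoin K s) (Algebra.adjoin K s) := by
  intro f hf
  induction hf using Algebra.adjoin_induction with
  | mem x hx => exact hs hx
  | algebraMap c =>
    rw [hD.map_algebraMap]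
    exact Subalgebra.zero_mem _
  | add x y _ _ hx hy =>
    rw [map_add]
    exact Subalgebra.add_mem _ hx hy
  | mul x y hx' hy' hx hy =>
    rw [hD x y]
    exact Subalgebra.add_mem _ (Subalgebra.mul_mem _ hx' hy) (Subalgebra.mul_mem _ hx hy')

theorem eqOn_adjoin (hD : IsDerivation K D) (hD' : IsDerivation K D') {s : Set R}
    (hs : Set.EqOn D D' s) : Set.EqOn D D' (Algebra.adjoin K s) := by
  intro f hf
  induction hf using Algebra.adjoin_induction with
  | mem x hx => exact hs hx
  | algebraMap c => rw [hD.map_algebraMap, hD'.map_algebraMap]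
  | add x y _ _ hx hy => rw [map_add, map_add, hx, hy]
  | mul x y _ _ hx hy => rw [hD x y, hD' x y, hx, hy]

end IsDerivation

section RepRing

variable (K : Type*) (A : Type*) [CommRing K] [Ring A] [Algebra K A]
variable (m : ℕ) (e : Fin m → A) (α : Fin m → ℕ)

theorem mk_eq_zero_of_mem_repRels {P : MvPolynomial (A × Fin (nn m α) × Fin (nn m α)) K}
    (hP : P ∈ repRels K A m e α) : Ideal.Quotient.mk (Ideal.span (repRels K A m e α)) P = 0 :=
  Ideal.Quotient.eq_zero_iff_mem.2 (Ideal.subset_span hP)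

theorem repGen_mul (a b : A) (i j : Fin (nn m α)) :
    repGen K A m e α (a * b) i j = ∑ k, repGen K A m e α a i k * repGen K A m e α b k j := by
  have h := mk_eq_zero_of_mem_repRels K A m e α (Or.inl ⟨a, b, i, j, rfl⟩)
  rwa [map_sub, sub_eq_zero, map_sum, Finset.sum_congr rfl fun k _ => map_mul _ _ _] at h

theorem repGen_add (a b : A) (i j : Fin (nn m α)) :
    repGen K A m e α (a + b) i j = repGen K A m e α a i j + repGen K A m e α b i j := by
  have h := mk_eq_zero_of_mem_repRels K A m e α (Or.inr (Or.inl ⟨a, b, i, j, rfl⟩))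
  rwa [map_sub, map_sub, sub_sub, sub_eq_zero] at h

theorem repGen_smul (c : K) (a : A) (i j : Fin (nn m α)) :
    repGen K A m e α (c • a) i j = c • repGen K A m e α a i j := by
  have h := mk_eq_zero_of_mem_repRels K A m e α (Or.inr (Or.inr (Or.inl ⟨c, a, i, j, rfl⟩)))
  rwa [map_sub, sub_eq_zero, map_mul, ← MvPolynomial.algebraMap_eq, Ideal.Quotient.mk_algebraMap,
    ← Algebra.smul_def] at h

theorem trRep_mul_comm (a b : A) :
    trRep K A m e α (a * b) = trRep K A m e α (b * a) := by
  simp only [trRep, repGen_mul]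
  rw [Finset.sum_comm]
  exact Finset.sum_congr rfl fun _ _ => Finset.sum_congr rfl fun _ _ => mul_comm _ _

noncomputable def trRepLinear : A →ₗ[K] RepRing K A m e α where
  toFun := trRep K A m e α
  map_add' a b := by simp only [trRep, repGen_add, Finset.sum_add_distrib]
  map_smul' c a := by simp only [trRep, repGen_smul, Finset.smul_sum, RingHom.id_apply]

theorem commSpan_le_ker_trRepLinear : commSpan K A ≤ LinearMap.ker (trRepLinear K A m e α) := by
  refine Submodule.span_le.2 ?_
  rintro _ ⟨a, b, rfl⟩
  simp only [SetLike.mem_coe, LinearMap.mem_ker, map_sub, sub_eq_zero]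
  exact trRep_mul_comm K A m e α a b

theorem trRep_eq_of_sub_mem_commSpan {a b : A} (h : a - b ∈ commSpan K A) :
    trRep K A m e α a = trRep K A m e α b := by
  have := commSpan_le_ker_trRepLinear K A m e α h
  rwa [LinearMap.mem_ker, map_sub, sub_eq_zero] at this

variable {K A m e α}

theorem map_trRep_of_map_repGen {d : A →ₗ[K] A} {D : RepRing K A m e α →ₗ[K] RepRing K A m e α}
    (hD : ∀ (a : A) (i j : Fin (nn m α)), D (repGen K A m e α a i j) = repGen K A m e α (d a) i j)
    (a : A) : D (trRep K A m e α a) = trRep K A m e α (d a) := by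
  simp only [trRep, map_sum, hD]

end RepRing

theorem induced_derivation_restricts_to_trace_algebra_general
    (K : Type*) (A : Type*) [CommRing K] [Ring A] [Algebra K A]
    (m : ℕ) (e : Fin m → A) (α : Fin m → ℕ)
    (d : A →ₗ[K] A)
    (D : RepRing K A m e α →ₗ[K] RepRing K A m e α)
    (hD : IsDerivation K D)
    (hDgen : ∀ (a : A) (i j : Fin (nn m α)),
      D (repGen K A m e α a i j) = repGen K A m e α (d a) i j) :
    (∀ f ∈ traceAlg K A m e α, D f ∈ traceAlg K A m e α) ∧
    (∀ (d' : A →ₗ[K] A), IsDerivation K d' → (∀ v, d' (e v) = 0) →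
      ∀ (D' : RepRing K A m e α →ₗ[K] RepRing K A m e α), IsDerivation K D' →
        (∀ (a : A) (i j : Fin (nn m α)),
          D' (repGen K A m e α a i j) = repGen K A m e α (d' a) i j) →
        (∀ a : A, d a - d' a ∈ commSpan K A) →
        ∀ f ∈ traceAlg K A m e α, D f = D' f) := by
  have hDtr := map_trRep_of_map_repGen hDgen
  refine ⟨hD.mapsTo_adjoin ?_, fun d' _ _ D' hD' hD'gen hdd' => hD.eqOn_adjoin hD' ?_⟩
  · rintro _ ⟨a, rfl⟩
    rw [hDtr]
    exact Algebra.subset_adjoin ⟨d a, rfl⟩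
  · rintro _ ⟨a, rfl⟩
    rw [hDtr, map_trRep_of_map_repGen hD'gen]
    exact trRep_eq_of_sub_mem_commSpan K A m e α (hdd' a)

/-- The induced derivation d_α restricts to a derivation of the trace algebra
T(A,α), and this restriction only depends on the map induced by d on A/[A,A]. -/
theorem induced_derivation_restricts_to_trace_algebra
    (K : Type*) (A : Type*) [CommRing K] [Ring A] [Algebra K A]
    (m : ℕ) (e : Fin m → A) (α : Fin m → ℕ)
    (he : CompleteOrthIdem A m e)
    (d : A →ₗ[K] A) (hd : IsDerivation K d) (hde : ∀ v, d (e v) = 0)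
    (D : RepRing K A m e α →ₗ[K] RepRing K A m e α)
    (hD : IsDerivation K D)
    (hDgen : ∀ (a : A) (i j : Fin (nn m α)),
      D (repGen K A m e α a i j) = repGen K A m e α (d a) i j) :
    (∀ f ∈ traceAlg K A m e α, D f ∈ traceAlg K A m e α) ∧
    (∀ (d' : A →ₗ[K] A), IsDerivation K d' → (∀ v, d' (e v) = 0) →
      ∀ (D' : RepRing K A m e α →ₗ[K] RepRing K A m e α), IsDerivation K D' →
        (∀ (a : A) (i j : Fin (nn m α)),
          D' (repGen K A m e α a i j) = repGen K A m e α (d' a) i j) →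
        (∀ a : A, d a - d' a ∈ commSpan K A) →
        ∀ f ∈ traceAlg K A m e α, D f = D' f) :=
  induced_derivation_restricts_to_trace_algebra_general K A m e α d D hD hDgen
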